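/- Define P(1) = p and P(n+1) = (pq)^n C_{n−1} for n ≥ 1, where p + q = 1 and 0 < q < 1/2. Then ∑_{n≥1} P(n) = 1. -/

import Mathlib

noncomputable def lsmCycleProb (p q : ℝ) (n : ℕ) : ℝ :=
  if n = 1 then p else (p * q) ^ (n - 1) * (catalan (n - 2) : ℝ)

/-!
The tail `∑_{n ≥ 0} P(n + 2)` is `pq · C(pq)`, where `C(x) = ∑ Cₙ xⁿ` is the Catalan generating
function. Inside its disc of convergence `C = 1 + x C²`, and for `x = pq` with `p + q = 1` this
quadratic factors as `(pC - 1)(qC - 1) = 0`, so `C(pq) ∈ {p⁻¹, q⁻¹}`. Since `C` is increasing on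
`[0, 1/4)`, the root `q⁻¹`, which decreases as `q` grows towards `1/2`, is excluded; hence
`C(pq) = p⁻¹` and the total mass is `p + pq · p⁻¹ = p + q = 1`.
-/

open Finset

theorem catalan_le_four_pow (n : ℕ) : catalan n ≤ 4 ^ n :=
  calc catalan n ≤ (n + 1) * catalan n := Nat.le_mul_of_pos_left _ n.succ_pos
    _ = n.centralBinom := succ_mul_catalan_eq_centralBinom n
    _ ≤ 4 ^ n := Nat.centralBinom_le_four_pow n

noncomputable def catalanGF (x : ℝ) : ℝ := ∑' n, (catalan n : ℝ) * x ^ n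

section catalanGF

variable {x : ℝ}

theorem summable_norm_catalan_mul_pow (hx : |x| < 1 / 4) :
    Summable fun n => ‖(catalan n : ℝ) * x ^ n‖ := by
  refine .of_nonneg_of_le (fun n => norm_nonneg _) (fun n => ?_)
    (summable_geometric_of_lt_one (by positivity) (by linarith : 4 * |x| < 1))
  rw [norm_mul, norm_pow, Real.norm_natCast, Real.norm_eq_abs, mul_pow]
  gcongr
  exact_mod_cast catalan_le_four_pow n

theorem summable_catalan_mul_pow (hx : |x| < 1 / 4) :
    Summable fun n => (catalan n : ℝ) * x ^ n :=
  (summable_norm_catalan_mul_pow hx).of_norm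

theorem hasSum_catalanGF (hx : |x| < 1 / 4) :
    HasSum (fun n => (catalan n : ℝ) * x ^ n) (catalanGF x) :=
  (summable_catalan_mul_pow hx).hasSum

theorem catalanGF_eq_one_add_mul_sq (hx : |x| < 1 / 4) :
    catalanGF x = 1 + x * catalanGF x ^ 2 := by
  have hnorm := summable_norm_catalan_mul_pow hx
  have hconv : ∀ n, ∑ ij ∈ antidiagonal n,
      (catalan ij.1 : ℝ) * x ^ ij.1 * ((catalan ij.2 : ℝ) * x ^ ij.2)
        = (catalan (n + 1) : ℝ) * x ^ n := by
    intro n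
    rw [catalan_succ', Nat.cast_sum, sum_mul]
    refine sum_congr rfl fun ij hij => ?_
    rw [← mem_antidiagonal.mp hij, pow_add]
    push_cast
    ring
  have hsq : x * catalanGF x ^ 2 = ∑' n, (catalan (n + 1) : ℝ) * x ^ (n + 1) := by
    rw [catalanGF, sq, tsum_mul_tsum_eq_tsum_sum_antidiagonal_of_summable_norm hnorm hnorm,
      tsum_congr hconv, ← tsum_mul_left]
    exact tsum_congr fun n => by ring
  rw [hsq, catalanGF, (summable_catalan_mul_pow hx).tsum_eq_zero_add]
  simp

theorem catalanGF_mono (hx : 0 ≤ x) {y : ℝ} (hxy : x ≤ y) (hy : y < 1 / 4) :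
    catalanGF x ≤ catalanGF y := by
  refine (summable_catalan_mul_pow (abs_lt.mpr ⟨by linarith, by linarith⟩)).tsum_le_tsum
    (fun n => ?_) (summable_catalan_mul_pow (abs_lt.mpr ⟨by linarith, hy⟩))
  gcongr

end catalanGF

section AddEqOne

variable {p q : ℝ}

theorem abs_mul_lt_quarter_of_add_eq_one (hpq : p + q = 1) (hq0 : 0 < q) (hq : q < 1 / 2) :
    |p * q| < 1 / 4 := by
  rw [abs_of_pos (mul_pos (by linarith) hq0)]
  nlinarith

theorem catalanGF_mul_eq_inv_or (hpq : p + q = 1) (hpq' : |p * q| < 1 / 4) :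
    catalanGF (p * q) = p⁻¹ ∨ catalanGF (p * q) = q⁻¹ := by
  set C := catalanGF (p * q)
  have hfactor : (p * C - 1) * (q * C - 1) = 0 := by
    linear_combination -catalanGF_eq_one_add_mul_sq hpq' - C * hpq
  rcases mul_eq_zero.mp hfactor with h | h
  · exact .inl (eq_inv_of_mul_eq_one_right (sub_eq_zero.mp h))
  · exact .inr (eq_inv_of_mul_eq_one_right (sub_eq_zero.mp h))

theorem catalanGF_mul_le_inv (hpq : p + q = 1) (hq0 : 0 < q) (hq : q < 1 / 2) :
    catalanGF (p * q) ≤ q⁻¹ := by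
  rcases catalanGF_mul_eq_inv_or hpq (abs_mul_lt_quarter_of_add_eq_one hpq hq0 hq) with h | h
  · rw [h]
    exact inv_anti₀ hq0 (by linarith)
  · exact h.le

theorem catalanGF_mul_eq_inv (hpq : p + q = 1) (hq0 : 0 < q) (hq : q < 1 / 2) :
    catalanGF (p * q) = p⁻¹ := by
  refine (catalanGF_mul_eq_inv_or hpq (abs_mul_lt_quarter_of_add_eq_one hpq hq0 hq)).resolve_right
    fun hC => ?_
  obtain rfl : p = 1 - q := eq_sub_of_add_eq hpq
  set q' := q / 2 + 1 / 4 with hq'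
  have hq'q : q < q' := by linarith
  have hq'half : q' < 1 / 2 := by linarith
  have hmono : catalanGF ((1 - q) * q) ≤ catalanGF ((1 - q') * q') :=
    catalanGF_mono (by nlinarith) (by nlinarith) (by nlinarith)
  have hbound := catalanGF_mul_le_inv (sub_add_cancel 1 q') (hq0.trans hq'q) hq'half
  have hinv : q'⁻¹ < q⁻¹ := inv_strictAnti₀ hq0 hq'q
  linarith

end AddEqOne

theorem lsmCycleProb_add_two (p q : ℝ) (n : ℕ) :
    lsmCycleProb p q (n + 2) = p * q * ((catalan n : ℝ) * (p * q) ^ n) := by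
  rw [lsmCycleProb, if_neg (by omega), show n + 2 - 1 = n + 1 by omega, Nat.add_sub_cancel,
    pow_succ]
  ring

theorem lsmCycleProb_sum_one (p q : ℝ) (hpq : p + q = 1)
    (hq0 : 0 < q) (hq : q < 1/2) :
    HasSum (fun n : ℕ => lsmCycleProb p q (n + 1)) 1 := by
  have hpq' := abs_mul_lt_quarter_of_add_eq_one hpq hq0 hq
  have htail : HasSum (fun n : ℕ => lsmCycleProb p q (n + 2)) q := by
    simp_rw [lsmCycleProb_add_two]
    have hp : p ≠ 0 := by linarith
    have h := (hasSum_catalanGF hpq').mul_left (p * q)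
    rwa [catalanGF_mul_eq_inv hpq hq0 hq, show p * q * p⁻¹ = q by field_simp] at h
  have h := HasSum.zero_add (f := fun n => lsmCycleProb p q (n + 1)) htail
  rwa [lsmCycleProb, if_pos rfl, hpq] at h
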